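/- arXiv:2012.05972 — 3 statements merged into one kernel-verified Lean document; each statement's English description precedes it below -/
import Mathlib

section
/- Superposition of closable forms: Suppose that for μ̂-almost every y ∈ Y the generalized nonnegative quadratic form Q^y on H is closable. Let (v_j)_{j≥1} be a sequence of strongly measurable functions v_j : Y → H such that for each j, ∫_Y ‖v_j(y)‖²_H dμ̂(y) < ∞ and 𝒬(v_j) < ∞, the functions y ↦ Q^y(v_i(y) − v_j(y)) and y ↦ Q^y(v_j(y)) are μ̂-measurable for all i, j, lim_{i,j→∞} 𝒬(v_i − v_j) = 0, and lim_{j→∞} ∫_Y ‖v_j(y)‖²_H dμ̂(y) = 0. Then lim_{j→∞} 𝒬(v_j) = 0; that is, the superposed quadratic form 𝒬 is closable on L²(Y; H). -/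
/-! Pass to a subsequence `w n = v (φ n)` with `∫ Q(w n - w (n+1)) ≤ 4⁻ⁿ` and
`∫ ‖w n‖² ≤ 4⁻ⁿ`. Then for a.e. `y` both `∑ 2ⁿ Q^y(w n y - w (n+1) y)` and `∑ ‖w n y‖²`
converge. The parallelogram law gives the quasi-triangle inequality
`Q(a - c) ≤ 2 Q(a - b) + 2 Q(b - c)`, whose factor `2` per step is absorbed by the weights `2ⁿ`,
so `(w n y)` is `Q^y`-Cauchy; it also tends to `0` in `H`, and closability of `Q^y` yields
`Q^y(w n y) → 0`. Finally `Q^y(v j) ≤ 2 Q^y(v j - w k) + 2 Q^y(w k)`, and Fatou's lemma in `k`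
bounds `𝒬(v j)` by `2 liminf_k 𝒬(v j - w k)`, which is small for large `j`. -/

open MeasureTheory Filter
open scoped ENNReal

/-- A generalized nonnegative quadratic form on a Hilbert space `H`: an
`[0,∞]`-valued function vanishing at `0`, satisfying the parallelogram law and
homogeneity of degree two. -/
def IsGenQuadraticForm {H : Type*} [NormedAddCommGroup H] [InnerProductSpace ℝ H]
    (Q : H → ℝ≥0∞) : Prop :=
  Q 0 = 0 ∧ (∀ u v : H, Q (u + v) + Q (u - v) = 2 * Q u + 2 * Q v) ∧
    ∀ (c : ℝ) (u : H), c ≠ 0 → Q (c • u) = ENNReal.ofReal (c ^ 2) * Q u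

/-- Closability of a generalized nonnegative quadratic form. -/
def IsClosableForm {H : Type*} [NormedAddCommGroup H] [InnerProductSpace ℝ H]
    (Q : H → ℝ≥0∞) : Prop :=
  ∀ u : ℕ → H,
    Tendsto (fun p : ℕ × ℕ => Q (u p.1 - u p.2)) atTop (nhds 0) →
    Tendsto (fun j => ‖u j‖) atTop (nhds 0) →
    Tendsto (fun j => Q (u j)) atTop (nhds 0)

open scoped Topology

namespace IsGenQuadraticForm

variable {H : Type*} [NormedAddCommGroup H] [InnerProductSpace ℝ H] {Q : H → ℝ≥0∞}

lemma map_neg (hQ : IsGenQuadraticForm Q) (u : H) : Q (-u) = Q u := by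
  simpa using hQ.2.2 (-1) u (by norm_num)

lemma map_sub_comm (hQ : IsGenQuadraticForm Q) (u v : H) : Q (u - v) = Q (v - u) := by
  rw [← hQ.map_neg, neg_sub]

lemma map_add_le (hQ : IsGenQuadraticForm Q) (u v : H) : Q (u + v) ≤ 2 * Q u + 2 * Q v :=
  hQ.2.1 u v ▸ le_self_add

lemma map_sub_le (hQ : IsGenQuadraticForm Q) (u v w : H) :
    Q (u - w) ≤ 2 * Q (u - v) + 2 * Q (v - w) := by
  simpa using hQ.map_add_le (u - v) (v - w)

lemma map_sub_le_sum_range (hQ : IsGenQuadraticForm Q) (w : ℕ → H) (d : ℕ) :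
    Q (w 0 - w d) ≤ ∑ m ∈ Finset.range d, 2 ^ (m + 1) * Q (w m - w (m + 1)) := by
  induction d generalizing w with
  | zero => simp [hQ.1]
  | succ d ih =>
    calc Q (w 0 - w (d + 1))
        ≤ 2 * Q (w 0 - w 1) + 2 * Q (w 1 - w (d + 1)) := hQ.map_sub_le _ _ _
      _ ≤ 2 * Q (w 0 - w 1) +
            2 * ∑ m ∈ Finset.range d, 2 ^ (m + 1) * Q (w (m + 1) - w (m + 1 + 1)) := by
          gcongr; exact ih fun m => w (m + 1)
      _ = ∑ m ∈ Finset.range (d + 1), 2 ^ (m + 1) * Q (w m - w (m + 1)) := by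
          rw [Finset.sum_range_succ', Finset.mul_sum, add_comm]
          simp [pow_succ', mul_assoc]

lemma tendsto_map_sub_of_tsum_ne_top (hQ : IsGenQuadraticForm Q) {w : ℕ → H}
    (hw : ∑' n, 2 ^ n * Q (w n - w (n + 1)) ≠ ⊤) :
    Tendsto (fun p : ℕ × ℕ => Q (w p.1 - w p.2)) atTop (𝓝 0) := by
  set tail : ℕ → ℝ≥0∞ := fun k => ∑' m, 2 ^ (m + k) * Q (w (m + k) - w (m + k + 1))
  have htail : Tendsto (fun k => 2 * tail k) atTop (𝓝 0) := by
    simpa only [mul_zero] using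
      ENNReal.Tendsto.const_mul (ENNReal.tendsto_sum_nat_add _ hw) (a := 2) (by simp)
  have hle : ∀ k l, k ≤ l → Q (w k - w l) ≤ 2 * tail k := by
    intro k l hkl
    obtain ⟨d, rfl⟩ := Nat.exists_eq_add_of_le hkl
    calc Q (w k - w (k + d))
        ≤ ∑ m ∈ Finset.range d, 2 ^ (m + 1) * Q (w (k + m) - w (k + m + 1)) :=
          hQ.map_sub_le_sum_range (fun m => w (k + m)) d
      _ ≤ ∑ m ∈ Finset.range d, 2 * (2 ^ (m + k) * Q (w (m + k) - w (m + k + 1))) := by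
          refine Finset.sum_le_sum fun m _ => ?_
          rw [add_comm k m, ← mul_assoc, ← pow_succ']
          exact mul_le_mul_left (pow_le_pow_right₀ (by norm_num) (by omega)) _
      _ ≤ 2 * tail k := by
          rw [← Finset.mul_sum]
          gcongr
          exact ENNReal.sum_le_tsum _
  refine ENNReal.tendsto_nhds_zero.2 fun ε hε => ?_
  obtain ⟨K, hK⟩ := eventually_atTop.1 (ENNReal.tendsto_nhds_zero.1 htail ε hε)
  refine eventually_atTop_prod_self'.2 ⟨K, fun k hk l hl => ?_⟩
  rcases le_total k l with hkl | hlk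
  · exact (hle k l hkl).trans (hK k hk)
  · exact hQ.map_sub_comm _ _ ▸ (hle l k hlk).trans (hK l hl)

lemma le_liminf_of_tendsto_zero (hQ : IsGenQuadraticForm Q) (u : H) {w : ℕ → H}
    (hw : Tendsto (fun k => Q (w k)) atTop (𝓝 0)) :
    Q u ≤ liminf (fun k => 2 * Q (u - w k)) atTop := by
  have hw2 : Tendsto (fun k => 2 * Q (w k)) atTop (𝓝 0) := by
    simpa only [mul_zero] using ENNReal.Tendsto.const_mul hw (a := 2) (by simp)
  rw [← ENNReal.liminf_add_of_right_tendsto_zero hw2]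
  refine le_liminf_of_le (by isBoundedDefault) (.of_forall fun k => ?_)
  simpa using hQ.map_add_le (u - w k) (w k)

end IsGenQuadraticForm

lemma tendsto_norm_zero_of_tsum_nnnorm_sq_ne_top {E : Type*} [SeminormedAddGroup E]
    {w : ℕ → E}
    (h : ∑' n, (‖w n‖₊ : ℝ≥0∞) ^ 2 ≠ ⊤) : Tendsto (fun n => ‖w n‖) atTop (𝓝 0) := by
  have hsq := ENNReal.tendsto_atTop_zero_of_tsum_ne_top h
  have := ((ENNReal.continuous_rpow_const (y := ((2 : ℕ) : ℝ)⁻¹)).tendsto 0).comp hsq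
  simp only [Function.comp_def, ENNReal.pow_rpow_inv_natCast two_ne_zero] at this
  rw [← tendsto_zero_iff_norm_tendsto_zero, tendsto_zero_iff_enorm_tendsto_zero]
  simpa [enorm_eq_nnnorm] using this

lemma exists_strictMono_le_of_tendsto_zero {a : ℕ × ℕ → ℝ≥0∞} {b : ℕ → ℝ≥0∞}
    (ha : Tendsto a atTop (𝓝 0)) (hb : Tendsto b atTop (𝓝 0)) {ε : ℕ → ℝ≥0∞}
    (hε : ∀ n, ε n ≠ 0) :
    ∃ φ : ℕ → ℕ, StrictMono φ ∧ ∀ n, a (φ n, φ (n + 1)) ≤ ε n ∧ b (φ n) ≤ ε n := by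
  have hev : ∀ n, ∀ᶠ k in atTop, (∀ i ≥ k, ∀ j ≥ k, a (i, j) ≤ ε n) ∧ b k ≤ ε n := by
    intro n
    have hεn := pos_iff_ne_zero.2 (hε n)
    obtain ⟨N, hN⟩ :=
      eventually_atTop_prod_self'.1 (ENNReal.tendsto_nhds_zero.1 ha _ hεn)
    filter_upwards [eventually_ge_atTop N, ENNReal.tendsto_nhds_zero.1 hb _ hεn] with k hk hbk
    exact ⟨fun i hi j hj => hN i (hk.trans hi) j (hk.trans hj), hbk⟩
  obtain ⟨φ, hφ, hP⟩ := extraction_forall_of_eventually hev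
  exact ⟨φ, hφ, fun n => ⟨(hP n).1 _ le_rfl _ (hφ.monotone n.le_succ), (hP n).2⟩⟩

lemma tendsto_zero_of_le_liminf_comp {c : ℕ → ℝ≥0∞} {B : ℕ × ℕ → ℝ≥0∞}
    (hB : Tendsto B atTop (𝓝 0)) {φ : ℕ → ℕ} (hφ : Tendsto φ atTop atTop)
    (hc : ∀ j, c j ≤ liminf (fun k => B (j, φ k)) atTop) : Tendsto c atTop (𝓝 0) := by
  refine ENNReal.tendsto_nhds_zero.2 fun ε hε => ?_
  obtain ⟨N, hN⟩ := eventually_atTop_prod_self'.1 (ENNReal.tendsto_nhds_zero.1 hB ε hε)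
  filter_upwards [eventually_ge_atTop N] with j hj
  refine (hc j).trans (liminf_le_of_frequently_le' (Eventually.frequently ?_))
  filter_upwards [hφ.eventually_ge_atTop N] with k hk using hN j hj (φ k) hk

section Integration

variable {Y : Type*} [MeasurableSpace Y] {μ : Measure Y}

lemma ae_tsum_lt_top {f : ℕ → Y → ℝ≥0∞} (hf : ∀ n, AEMeasurable (f n) μ)
    (h : ∑' n, ∫⁻ y, f n y ∂μ ≠ ⊤) : ∀ᵐ y ∂μ, ∑' n, f n y < ⊤ :=
  ae_lt_top' (AEMeasurable.tsum hf) (by rwa [lintegral_tsum hf])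

lemma lintegral_le_liminf_lintegral_sub {H : Type*} [NormedAddCommGroup H]
    [InnerProductSpace ℝ H] {Q : Y → H → ℝ≥0∞} (hQ : ∀ y, IsGenQuadraticForm (Q y))
    {u : Y → H} {w : ℕ → Y → H} (hmeas : ∀ k, Measurable fun y => Q y (u y - w k y))
    (hw : ∀ᵐ y ∂μ, Tendsto (fun k => Q y (w k y)) atTop (𝓝 0)) :
    ∫⁻ y, Q y (u y) ∂μ ≤ liminf (fun k => ∫⁻ y, 2 * Q y (u y - w k y) ∂μ) atTop :=
  calc ∫⁻ y, Q y (u y) ∂μ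
      ≤ ∫⁻ y, liminf (fun k => 2 * Q y (u y - w k y)) atTop ∂μ :=
        lintegral_mono_ae (hw.mono fun y hy => (hQ y).le_liminf_of_tendsto_zero (u y) hy)
    _ ≤ _ := lintegral_liminf_le fun k => (hmeas k).const_mul 2

end Integration

theorem superposition_closable_general {Y : Type*} [MeasurableSpace Y]
    (μ : Measure Y)
    {H : Type*} [NormedAddCommGroup H] [InnerProductSpace ℝ H]
    (Q : Y → H → ℝ≥0∞)
    (hform : ∀ y, IsGenQuadraticForm (Q y))
    (hclosable : ∀ᵐ y ∂μ, IsClosableForm (Q y))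
    (v : ℕ → Y → H)
    (hvmeas : ∀ j, StronglyMeasurable (v j))
    (hQmeas : ∀ i j, Measurable (fun y => Q y (v i y - v j y)))
    (hQCauchy : Tendsto (fun p : ℕ × ℕ => ∫⁻ y, Q y (v p.1 y - v p.2 y) ∂μ)
      atTop (nhds 0))
    (hL2zero : Tendsto (fun j => ∫⁻ y, (‖v j y‖₊ : ℝ≥0∞) ^ 2 ∂μ) atTop (nhds 0)) :
    Tendsto (fun j => ∫⁻ y, Q y (v j y) ∂μ) atTop (nhds 0) := by
  obtain ⟨φ, hφ, hφ_le⟩ := exists_strictMono_le_of_tendsto_zero hQCauchy hL2zero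
    (ε := fun n => 4⁻¹ ^ n) (by simp)
  have hgeom : (2 : ℝ≥0∞) * 4⁻¹ < 1 := by
    rw [← div_eq_mul_inv, ENNReal.div_lt_iff (by simp) (by simp)]; norm_num
  have hQsum : ∀ᵐ y ∂μ, ∑' n, 2 ^ n * Q y (v (φ n) y - v (φ (n + 1)) y) < ⊤ := by
    refine ae_tsum_lt_top (fun n => ((hQmeas _ _).const_mul _).aemeasurable) ?_
    refine ne_top_of_le_ne_top (tsum_geometric_lt_top.2 hgeom).ne
      (ENNReal.tsum_le_tsum fun n => ?_)
    rw [lintegral_const_mul _ (hQmeas _ _), mul_pow]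
    exact mul_le_mul_right (hφ_le n).1 _
  have hL2sum : ∀ᵐ y ∂μ, ∑' n, (‖v (φ n) y‖₊ : ℝ≥0∞) ^ 2 < ⊤ := by
    refine ae_tsum_lt_top (fun n => (hvmeas _).enorm.pow_const 2 |>.aemeasurable) ?_
    exact ne_top_of_le_ne_top (tsum_geometric_lt_top.2 (by norm_num)).ne
      (ENNReal.tsum_le_tsum fun n => (hφ_le n).2)
  have hsub : ∀ᵐ y ∂μ, Tendsto (fun k => Q y (v (φ k) y)) atTop (𝓝 0) := by
    filter_upwards [hclosable, hQsum, hL2sum] with y hcl hQy hL2y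
    exact hcl _ ((hform y).tendsto_map_sub_of_tsum_ne_top hQy.ne)
      (tendsto_norm_zero_of_tsum_nnnorm_sq_ne_top hL2y.ne)
  refine tendsto_zero_of_le_liminf_comp (B := fun p => 2 * ∫⁻ y, Q y (v p.1 y - v p.2 y) ∂μ)
    (by simpa only [mul_zero] using ENNReal.Tendsto.const_mul hQCauchy (a := 2) (by simp))
    hφ.tendsto_atTop fun j => ?_
  simpa only [lintegral_const_mul _ (hQmeas _ _)] using
    lintegral_le_liminf_lintegral_sub hform (fun k => hQmeas j (φ k)) hsub

/-- Superposition of closable forms: if `μ̂`-a.e. fibre form `Q^y` is closable,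
then the superposed form `𝒬(v) = ∫ Q^y(v(y)) dμ̂(y)` is closable on `L²(Y; H)`. -/
theorem superposition_closable {Y : Type*} [MeasurableSpace Y]
    (μ : Measure Y) [SigmaFinite μ]
    {H : Type*} [NormedAddCommGroup H] [InnerProductSpace ℝ H] [CompleteSpace H]
    [SecondCountableTopology H]
    (Q : Y → H → ℝ≥0∞)
    (hform : ∀ y, IsGenQuadraticForm (Q y))
    (hclosable : ∀ᵐ y ∂μ, IsClosableForm (Q y))
    (v : ℕ → Y → H)
    (hvmeas : ∀ j, StronglyMeasurable (v j))
    (hvL2 : ∀ j, ∫⁻ y, (‖v j y‖₊ : ℝ≥0∞) ^ 2 ∂μ < ⊤)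
    (hvQfin : ∀ j, ∫⁻ y, Q y (v j y) ∂μ < ⊤)
    (hQmeas : ∀ i j, Measurable (fun y => Q y (v i y - v j y)))
    (hQmeas' : ∀ j, Measurable (fun y => Q y (v j y)))
    (hQCauchy : Tendsto (fun p : ℕ × ℕ => ∫⁻ y, Q y (v p.1 y - v p.2 y) ∂μ)
      atTop (nhds 0))
    (hL2zero : Tendsto (fun j => ∫⁻ y, (‖v j y‖₊ : ℝ≥0∞) ^ 2 ∂μ) atTop (nhds 0)) :
    Tendsto (fun j => ∫⁻ y, Q y (v j y) ∂μ) atTop (nhds 0) :=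
  superposition_closable_general μ Q hform hclosable v hvmeas hQmeas hQCauchy hL2zero
end

section
/- Closability of the weighted Dirichlet integral (Euclidean case): Let (φ_j)_{j≥1} be a sequence in C_c¹(U) such that lim_{i,j→∞} ∫_U |∇φ_i(x) − ∇φ_j(x)|² dμ(x) = 0 and lim_{j→∞} ∫_U φ_j(x)² dμ(x) = 0. Then lim_{j→∞} ∫_U |∇φ_j(x)|² dμ(x) = 0; that is, the weighted Dirichlet integral D^{(μ)}(φ) = ∫_U |∇φ|² dμ on C_c¹(U) is closable on L²(U, μ). -/
open MeasureTheory Filter Topology InnerProductSpace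
open scoped ENNReal RealInnerProductSpace

/-!
Since `K⁻¹ ≤ ρ ≤ K`, the spaces `L²(μ)` and `L²(U, dx)` coincide with equivalent norms. The
gradients `∇φⱼ` form a Cauchy sequence in `L²(μ)`, so they converge to some `G`. Testing against
`ψ ∈ C_c^∞(U)` and integrating by parts,
`∫_U ψ G = lim ∫_U ψ ∇φⱼ = - lim ∫_U φⱼ ∇ψ = 0` because `φⱼ → 0` in `L²`.
Hence `G = 0` almost everywhere on `U` (fundamental lemma of the calculus of variations), i.e.
`∇φⱼ → 0` in `L²(μ)`.
-/

lemma ENNReal.tendsto_sq_nhds_zero_iff {ι : Type*} {l : Filter ι} {a : ι → ℝ≥0∞} :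
    Tendsto (fun i => a i ^ 2) l (𝓝 0) ↔ Tendsto a l (𝓝 0) := by
  refine ⟨fun h => ?_, fun h => by simpa using ENNReal.Tendsto.pow (n := 2) h⟩
  have h' := h.ennrpow_const ((2 : ℕ) : ℝ)⁻¹
  simp only [ENNReal.pow_rpow_inv_natCast two_ne_zero] at h'
  rwa [ENNReal.zero_rpow_of_pos (by positivity)] at h'

namespace MeasureTheory

section Lp

variable {α F : Type*} [MeasurableSpace α] [NormedAddCommGroup F] {μ ν : Measure α}
  {ι : Type*} {l : Filter ι}

lemma lintegral_enorm_sq_eq_eLpNorm_sq (f : α → F) :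
    ∫⁻ x, ‖f x‖ₑ ^ 2 ∂μ = eLpNorm f 2 μ ^ 2 := by
  simpa using (eLpNorm_nnreal_pow_eq_lintegral (f := f) (μ := μ) (p := 2) two_ne_zero).symm

lemma tendsto_lintegral_enorm_sq_zero_iff {f : ι → α → F} :
    Tendsto (fun i => ∫⁻ x, ‖f i x‖ₑ ^ 2 ∂μ) l (𝓝 0) ↔
      Tendsto (fun i => eLpNorm (f i) 2 μ) l (𝓝 0) := by
  simp_rw [lintegral_enorm_sq_eq_eLpNorm_sq, ENNReal.tendsto_sq_nhds_zero_iff]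

lemma tendsto_eLpNorm_zero_of_measure_le_smul {c : ℝ≥0∞} (hc : c ≠ ∞) (hνμ : ν ≤ c • μ)
    {p : ℝ≥0∞} {f : ι → α → F} (hf : Tendsto (fun i => eLpNorm (f i) p μ) l (𝓝 0)) :
    Tendsto (fun i => eLpNorm (f i) p ν) l (𝓝 0) := by
  have hbound := ENNReal.Tendsto.const_mul (a := c ^ (1 / p).toReal) hf
    (Or.inr (ENNReal.rpow_ne_top_of_nonneg ENNReal.toReal_nonneg hc))
  rw [mul_zero] at hbound
  exact tendsto_of_tendsto_of_tendsto_of_le_of_le tendsto_const_nhds hbound (fun _ => zero_le)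
    fun _ => eLpNorm_le_of_measure_le_smul hνμ

lemma exists_memLp_tendsto_eLpNorm_sub [CompleteSpace F] [Nonempty ι] [SemilatticeSup ι]
    {p : ℝ≥0∞} [Fact (1 ≤ p)] {f : ι → α → F} (hf : ∀ i, MemLp (f i) p μ)
    (hcauchy : Tendsto (fun q : ι × ι => eLpNorm (f q.1 - f q.2) p μ) atTop (𝓝 0)) :
    ∃ g, MemLp g p μ ∧ Tendsto (fun i => eLpNorm (f i - g) p μ) atTop (𝓝 0) := by
  obtain ⟨g, hg⟩ := cauchySeq_tendsto_of_complete <|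
    (Lp.cauchySeq_Lp_iff_cauchySeq_eLpNorm fun i => (hf i).toLp (f i)).2 <|
      hcauchy.congr fun q => eLpNorm_congr_ae ((hf q.1).coeFn_toLp.sub (hf q.2).coeFn_toLp).symm
  refine ⟨g, Lp.memLp g, ((Lp.tendsto_Lp_iff_tendsto_eLpNorm' _ g).1 hg).congr fun i => ?_⟩
  exact eLpNorm_congr_ae ((hf i).coeFn_toLp.sub EventuallyEq.rfl)

variable [NormedSpace ℝ F] {p q : ℝ≥0∞} [p.HolderConjugate q]

lemma tendsto_integral_smul_of_tendsto_eLpNorm_sub {ψ : α → ℝ} (hψ : MemLp ψ p μ)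
    {f : ι → α → F} {g : α → F} (hf : ∀ i, MemLp (f i) q μ) (hg : MemLp g q μ)
    (hfg : Tendsto (fun i => eLpNorm (f i - g) q μ) l (𝓝 0)) :
    Tendsto (fun i => ∫ x, ψ x • f i x ∂μ) l (𝓝 (∫ x, ψ x • g x ∂μ)) := by
  refine tendsto_integral_of_L1' _ (hg.smul (r := 1) hψ).1
    (Eventually.of_forall fun i => memLp_one_iff_integrable.1 ((hf i).smul hψ)) ?_
  have hbound := ENNReal.Tendsto.const_mul hfg (Or.inr hψ.eLpNorm_ne_top)
  rw [mul_zero] at hbound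
  refine tendsto_of_tendsto_of_tendsto_of_le_of_le tendsto_const_nhds hbound
    (fun _ => zero_le) fun i => ?_
  calc eLpNorm ((fun x => ψ x • f i x) - fun x => ψ x • g x) 1 μ
      = eLpNorm (ψ • (f i - g)) 1 μ := by congr 1; ext x; simp [smul_sub]
    _ ≤ _ := eLpNorm_smul_le_mul_eLpNorm ((hf i).1.sub hg.1) hψ.1

lemma tendsto_integral_smul_zero_of_tendsto_eLpNorm {c : ι → α → ℝ} (hc : ∀ i, MemLp (c i) p μ)
    {g : α → F} (hg : MemLp g q μ) (hc0 : Tendsto (fun i => eLpNorm (c i) p μ) l (𝓝 0)) :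
    Tendsto (fun i => ∫ x, c i x • g x ∂μ) l (𝓝 0) := by
  have hL1 := tendsto_integral_of_L1' (μ := μ) (l := l) 0 aestronglyMeasurable_zero
    (Eventually.of_forall fun i => memLp_one_iff_integrable.1 (hg.smul (hc i))) ?_
  · simpa using hL1
  have hbound := ENNReal.Tendsto.mul_const hc0 (Or.inr hg.eLpNorm_ne_top)
  rw [zero_mul] at hbound
  refine tendsto_of_tendsto_of_tendsto_of_le_of_le tendsto_const_nhds hbound
    (fun _ => zero_le) fun i => ?_
  simpa using eLpNorm_smul_le_mul_eLpNorm hg.1 (hc i).1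

end Lp

namespace Measure

variable {α : Type*} [MeasurableSpace α] {μ : Measure α} {f : α → ℝ≥0∞} {c : ℝ≥0∞}

lemma withDensity_le_smul (h : ∀ᵐ x ∂μ, f x ≤ c) : μ.withDensity f ≤ c • μ :=
  withDensity_const c ▸ withDensity_mono h

lemma le_smul_withDensity (hc₀ : c ≠ 0) (hc : c ≠ ∞) (h : ∀ᵐ x ∂μ, c ≤ f x) :
    μ ≤ c⁻¹ • μ.withDensity f := by
  calc μ = c⁻¹ • c • μ := by rw [smul_smul, ENNReal.inv_mul_cancel hc₀ hc, one_smul]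
    _ ≤ c⁻¹ • μ.withDensity f := by
      gcongr
      exact withDensity_const c ▸ withDensity_mono h

end Measure

end MeasureTheory

section Gradient

variable {E : Type*} [NormedAddCommGroup E] [InnerProductSpace ℝ E] [CompleteSpace E] {f : E → ℝ}

lemma ContDiff.continuous_gradient {n : WithTop ℕ∞} (hf : ContDiff ℝ n f) (hn : n ≠ 0) :
    Continuous (gradient f) :=
  (toDual ℝ E).symm.continuous.comp (hf.continuous_fderiv hn)

lemma tsupport_gradient_subset (f : E → ℝ) : tsupport (gradient f) ⊆ tsupport f :=
  (tsupport_comp_subset (map_zero (toDual ℝ E).symm) _).trans (tsupport_fderiv_subset ℝ)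

lemma HasCompactSupport.gradient (hf : HasCompactSupport f) : HasCompactSupport (gradient f) :=
  hf.mono' ((subset_tsupport _).trans (tsupport_gradient_subset f))

variable [FiniteDimensional ℝ E] [MeasurableSpace E] [BorelSpace E] {μ : Measure E}
  [μ.IsAddHaarMeasure]

theorem integral_smul_gradient_eq_neg {ψ : E → ℝ} (hf : ContDiff ℝ 1 f) (hψ : ContDiff ℝ 1 ψ)
    (hψc : HasCompactSupport ψ) :
    ∫ x, ψ x • gradient f x ∂μ = -∫ x, f x • gradient ψ x ∂μ := by
  have hderiv : ∀ {g : E → ℝ}, ContDiff ℝ 1 g → ∀ v, Continuous fun x => fderiv ℝ g x v :=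
    fun hg v => (hg.continuous_fderiv one_ne_zero).clm_apply continuous_const
  have hψf : Integrable (fun x => ψ x • gradient f x) μ :=
    (hψ.continuous.smul (hf.continuous_gradient one_ne_zero)).integrable_of_hasCompactSupport
      hψc.smul_right
  have hfψ : Integrable (fun x => f x • gradient ψ x) μ :=
    (hf.continuous.smul (hψ.continuous_gradient one_ne_zero)).integrable_of_hasCompactSupport
      hψc.gradient.smul_left
  refine ext_inner_left ℝ fun v => ?_
  rw [inner_neg_right, ← integral_inner hψf, ← integral_inner hfψ]
  simp only [real_inner_smul_right, inner_gradient_right, conj_trivial]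
  rw [integral_mul_fderiv_eq_neg_fderiv_mul_of_integrable
    (((hderiv hψ v).mul hf.continuous).integrable_of_hasCompactSupport
      (hψc.fderiv_apply (𝕜 := ℝ) v).mul_right)
    ((hψ.continuous.mul (hderiv hf v)).integrable_of_hasCompactSupport hψc.mul_right)
    ((hψ.continuous.mul hf.continuous).integrable_of_hasCompactSupport hψc.mul_right)
    (fun x _ => hψ.differentiable one_ne_zero x) (fun x _ => hf.differentiable one_ne_zero x)]
  simp only [mul_comm]

theorem ae_restrict_eq_zero_of_tendsto_eLpNorm_gradient_sub {U : Set E} (hU : IsOpen U)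
    {ι : Type*} {l : Filter ι} [l.NeBot] {φ : ι → E → ℝ} (hφ : ∀ i, ContDiff ℝ 1 (φ i))
    (hφc : ∀ i, HasCompactSupport (φ i))
    (hφ0 : Tendsto (fun i => eLpNorm (φ i) 2 (μ.restrict U)) l (𝓝 0))
    {G : E → E} (hG : MemLp G 2 (μ.restrict U))
    (hφG : Tendsto (fun i => eLpNorm (gradient (φ i) - G) 2 (μ.restrict U)) l (𝓝 0)) :
    G =ᵐ[μ.restrict U] 0 := by
  refine (ae_restrict_iff' hU.measurableSet).2 <| hU.ae_eq_zero_of_integral_contDiff_smul_eq_zero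
    (locallyIntegrableOn_of_locallyIntegrable_restrict (hG.locallyIntegrable one_le_two))
    fun ψ hψ hψc hψU => ?_
  have hψ1 : ContDiff ℝ 1 ψ := hψ.of_le (by exact_mod_cast le_top)
  have hψ0 : ∀ x ∉ U, ψ x = 0 := fun x hx => image_eq_zero_of_notMem_tsupport (hx <| hψU ·)
  have hgradψ0 : ∀ x ∉ U, gradient ψ x = 0 := fun x hx =>
    image_eq_zero_of_notMem_tsupport (hx <| hψU <| tsupport_gradient_subset ψ ·)
  have hmemLp : ∀ {g : E → ℝ}, ContDiff ℝ 1 g → HasCompactSupport g →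
      MemLp g 2 (μ.restrict U) ∧ MemLp (gradient g) 2 (μ.restrict U) := fun hg hgc =>
    ⟨(hg.continuous.memLp_of_hasCompactSupport hgc).restrict U,
      ((hg.continuous_gradient one_ne_zero).memLp_of_hasCompactSupport hgc.gradient).restrict U⟩
  have hlim : Tendsto (fun i => ∫ x in U, ψ x • gradient (φ i) x ∂μ) l
      (𝓝 (∫ x in U, ψ x • G x ∂μ)) :=
    tendsto_integral_smul_of_tendsto_eLpNorm_sub (hmemLp hψ1 hψc).1
      (fun i => (hmemLp (hφ i) (hφc i)).2) hG hφG
  have hlim₀ : Tendsto (fun i => ∫ x in U, ψ x • gradient (φ i) x ∂μ) l (𝓝 0) := by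
    have h := (tendsto_integral_smul_zero_of_tendsto_eLpNorm (fun i => (hmemLp (hφ i) (hφc i)).1)
      (hmemLp hψ1 hψc).2 hφ0).neg
    rw [neg_zero] at h
    refine h.congr fun i => ?_
    rw [setIntegral_eq_integral_of_forall_compl_eq_zero fun x hx => by simp [hgradψ0 x hx],
      setIntegral_eq_integral_of_forall_compl_eq_zero fun x hx => by simp [hψ0 x hx],
      integral_smul_gradient_eq_neg (hφ i) hψ1 hψc]
  rw [← setIntegral_eq_integral_of_forall_compl_eq_zero fun x hx => by simp [hψ0 x hx]]
  exact tendsto_nhds_unique hlim hlim₀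

end Gradient

theorem weighted_dirichlet_integral_closable_general {n : ℕ}
    (U : Set (EuclideanSpace ℝ (Fin n))) (hU : IsOpen U)
    (ρ : EuclideanSpace ℝ (Fin n) → ℝ)
    (K : ℝ) (hK : 1 ≤ K) (hρ : ∀ x, K⁻¹ ≤ ρ x ∧ ρ x ≤ K)
    (μ : Measure (EuclideanSpace ℝ (Fin n)))
    (hμ : μ = (volume.restrict U).withDensity (fun x => ENNReal.ofReal (ρ x)))
    (φ : ℕ → EuclideanSpace ℝ (Fin n) → ℝ)
    (hφ : ∀ j, ContDiff ℝ 1 (φ j) ∧ HasCompactSupport (φ j) ∧ tsupport (φ j) ⊆ U)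
    (hgradCauchy : Tendsto
      (fun p : ℕ × ℕ =>
        ∫⁻ x, (‖gradient (φ p.1) x - gradient (φ p.2) x‖₊ : ℝ≥0∞) ^ 2 ∂μ)
      atTop (nhds 0))
    (hL2 : Tendsto (fun j => ∫⁻ x, ENNReal.ofReal ((φ j x) ^ 2) ∂μ) atTop (nhds 0)) :
    Tendsto (fun j => ∫⁻ x, (‖gradient (φ j) x‖₊ : ℝ≥0∞) ^ 2 ∂μ) atTop (nhds 0) := by
  set ν : Measure (EuclideanSpace ℝ (Fin n)) := volume.restrict U
  have hKinv : ENNReal.ofReal K⁻¹ ≠ 0 := (ENNReal.ofReal_pos.2 (inv_pos.2 (by linarith))).ne'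
  have hc : (ENNReal.ofReal K⁻¹)⁻¹ ≠ ∞ := ENNReal.inv_ne_top.2 hKinv
  have hμν : μ ≤ ENNReal.ofReal K • ν := hμ ▸
    Measure.withDensity_le_smul (ae_of_all _ fun x => ENNReal.ofReal_le_ofReal (hρ x).2)
  have hνμ : ν ≤ (ENNReal.ofReal K⁻¹)⁻¹ • μ := hμ ▸
    Measure.le_smul_withDensity hKinv ENNReal.ofReal_ne_top
      (ae_of_all _ fun x => ENNReal.ofReal_le_ofReal (hρ x).1)
  have hμvol : μ ≤ ENNReal.ofReal K • volume :=
    hμν.trans (by gcongr; exact Measure.restrict_le_self)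
  have hgradL2 : ∀ j, MemLp (gradient (φ j)) 2 μ := fun j =>
    (((hφ j).1.continuous_gradient one_ne_zero).memLp_of_hasCompactSupport
      (hφ j).2.1.gradient).of_measure_le_smul ENNReal.ofReal_ne_top hμvol
  obtain ⟨G, hG, hφG⟩ := exists_memLp_tendsto_eLpNorm_sub hgradL2
    (tendsto_lintegral_enorm_sq_zero_iff.1 hgradCauchy)
  have hφ0 : Tendsto (fun j => eLpNorm (φ j) 2 μ) atTop (𝓝 0) := by
    refine tendsto_lintegral_enorm_sq_zero_iff.1 (hL2.congr fun j => lintegral_congr fun x => ?_)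
    rw [← sq_abs, ENNReal.ofReal_pow (abs_nonneg _), Real.enorm_eq_ofReal_abs]
  have hG0 : G =ᵐ[ν] 0 :=
    ae_restrict_eq_zero_of_tendsto_eLpNorm_gradient_sub hU (fun j => (hφ j).1)
      (fun j => (hφ j).2.1) (tendsto_eLpNorm_zero_of_measure_le_smul hc hνμ hφ0)
      (hG.of_measure_le_smul hc hνμ) (tendsto_eLpNorm_zero_of_measure_le_smul hc hνμ hφG)
  refine tendsto_lintegral_enorm_sq_zero_iff.2 (hφG.congr fun j => eLpNorm_congr_ae ?_)
  filter_upwards [Measure.absolutelyContinuous_of_le_smul hμν hG0] with x hx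
  simp [hx]

/-- Closability of the weighted Dirichlet integral on an open set `U ⊆ ℝⁿ`
with a Borel density bounded and bounded away from zero. -/
theorem weighted_dirichlet_integral_closable {n : ℕ}
    (U : Set (EuclideanSpace ℝ (Fin n))) (hU : IsOpen U)
    (ρ : EuclideanSpace ℝ (Fin n) → ℝ) (hρmeas : Measurable ρ)
    (K : ℝ) (hK : 1 ≤ K) (hρ : ∀ x, K⁻¹ ≤ ρ x ∧ ρ x ≤ K)
    (μ : Measure (EuclideanSpace ℝ (Fin n)))
    (hμ : μ = (volume.restrict U).withDensity (fun x => ENNReal.ofReal (ρ x)))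
    (φ : ℕ → EuclideanSpace ℝ (Fin n) → ℝ)
    (hφ : ∀ j, ContDiff ℝ 1 (φ j) ∧ HasCompactSupport (φ j) ∧ tsupport (φ j) ⊆ U)
    (hgradCauchy : Tendsto
      (fun p : ℕ × ℕ =>
        ∫⁻ x, (‖gradient (φ p.1) x - gradient (φ p.2) x‖₊ : ℝ≥0∞) ^ 2 ∂μ)
      atTop (nhds 0))
    (hL2 : Tendsto (fun j => ∫⁻ x, ENNReal.ofReal ((φ j x) ^ 2) ∂μ) atTop (nhds 0)) :
    Tendsto (fun j => ∫⁻ x, (‖gradient (φ j) x‖₊ : ℝ≥0∞) ^ 2 ∂μ) atTop (nhds 0) :=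
  weighted_dirichlet_integral_closable_general U hU ρ K hK hρ μ hμ φ hφ hgradCauchy hL2
end

section
/- Invariance of a topological attractor: Let X be a compact Hausdorff topological space, f : X → X a continuous map, and U ⊆ X an open set such that the closure of f(U) is contained in U. Define Λ := ⋂_{n ≥ 0} f^n(U), where f^n(U) denotes the image of U under the n-th iterate of f. Then f(Λ) = Λ. -/
/-!
The images `f^[n] '' U` are squeezed between the compact sets `Kₙ = f^[n] '' closure (f '' U)`:
`f^[n+1] '' U ⊆ Kₙ ⊆ f^[n] '' U`, so `Λ = ⋂ Kₙ`. The `Kₙ` are decreasing with `f '' Kₙ = Kₙ₊₁`,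
and for a decreasing sequence of compact sets the image commutes with the intersection
(a point in every `f '' Kₙ` has a nonempty fibre in every `Kₙ`, and these fibres are nested
compact sets). Hence `f '' Λ = ⋂ Kₙ₊₁ = Λ`.
-/

open Set

theorem Set.iInter_eq_iInter_of_interlaced {α : Type*} {a b : ℕ → Set α}
    (hab : ∀ n, a (n + 1) ⊆ b n) (hba : ∀ n, b n ⊆ a n) : ⋂ n, a n = ⋂ n, b n :=
  Subset.antisymm (subset_iInter fun n => (iInter_subset a (n + 1)).trans (hab n))
    (subset_iInter fun n => (iInter_subset b n).trans (hba n))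

theorem Continuous.image_iInter_of_antitone {X Y : Type*} [TopologicalSpace X]
    [TopologicalSpace Y] [T1Space Y] {f : X → Y} (hf : Continuous f) {K : ℕ → Set X}
    (hK : Antitone K) (hK₀ : IsCompact (K 0)) (hKc : ∀ n, IsClosed (K n)) :
    f '' ⋂ n, K n = ⋂ n, f '' K n := by
  refine Subset.antisymm (image_iInter_subset K f) fun y hy => ?_
  have hfibre : ∀ n, (f ⁻¹' {y} ∩ K n).Nonempty := fun n => by
    obtain ⟨x, hx, rfl⟩ := mem_iInter.mp hy n
    exact ⟨x, rfl, hx⟩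
  obtain ⟨x, hx⟩ := IsCompact.nonempty_iInter_of_sequence_nonempty_isCompact_isClosed
    (fun n => f ⁻¹' {y} ∩ K n) (fun n => inter_subset_inter_right _ (hK n.le_succ)) hfibre
    (hK₀.inter_left (isClosed_singleton.preimage hf))
    (fun n => (isClosed_singleton.preimage hf).inter (hKc n))
  exact ⟨x, mem_iInter.mpr fun n => (mem_iInter.mp hx n).2, (mem_iInter.mp hx 0).1⟩

section TrappingRegion

variable {X : Type*} [TopologicalSpace X] {f : X → X} {U : Set X}

theorem image_iterate_image_closure_antitone (htrap : closure (f '' U) ⊆ U) :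
    Antitone fun n => f^[n] '' closure (f '' U) := by
  refine antitone_nat_of_succ_le fun n => ?_
  have hinv : f '' closure (f '' U) ⊆ closure (f '' U) :=
    (image_mono htrap).trans subset_closure
  simpa only [Function.iterate_succ, image_comp] using image_mono hinv

theorem iInter_image_iterate_eq_iInter_image_iterate_closure (htrap : closure (f '' U) ⊆ U) :
    ⋂ n, f^[n] '' U = ⋂ n, f^[n] '' closure (f '' U) := by
  refine iInter_eq_iInter_of_interlaced (fun n => ?_) (fun n => image_mono htrap)
  simpa only [Function.iterate_succ, image_comp] using image_mono subset_closure

end TrappingRegion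

theorem attractor_invariant_general {X : Type*} [TopologicalSpace X] [CompactSpace X] [T2Space X]
    (f : X → X) (hf : Continuous f) (U : Set X)
    (htrap : closure (f '' U) ⊆ U) :
    f '' (⋂ n : ℕ, f^[n] '' U) = ⋂ n : ℕ, f^[n] '' U := by
  set K : ℕ → Set X := fun n => f^[n] '' closure (f '' U)
  have hKc : ∀ n, IsClosed (K n) := fun n =>
    (isClosed_closure.isCompact.image (hf.iterate n)).isClosed
  have hK : Antitone K := image_iterate_image_closure_antitone htrap
  calc f '' ⋂ n, f^[n] '' U
      = f '' ⋂ n, K n := by rw [iInter_image_iterate_eq_iInter_image_iterate_closure htrap]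
    _ = ⋂ n, K (n + 1) := by
        simp only [hf.image_iInter_of_antitone hK (hKc 0).isCompact hKc, K,
          Function.iterate_succ', image_comp]
    _ = ⋂ n, K n := hK.iInter_nat_add 1
    _ = ⋂ n, f^[n] '' U := (iInter_image_iterate_eq_iInter_image_iterate_closure htrap).symm

/-- Invariance of a topological attractor: if `U` is a trapping region
(`closure (f '' U) ⊆ U`), then `Λ = ⋂ n, f^[n] '' U` satisfies `f(Λ) = Λ`. -/
theorem attractor_invariant {X : Type*} [TopologicalSpace X] [CompactSpace X] [T2Space X]
    (f : X → X) (hf : Continuous f) (U : Set X) (hU : IsOpen U)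
    (htrap : closure (f '' U) ⊆ U) :
    f '' (⋂ n : ℕ, f^[n] '' U) = ⋂ n : ℕ, f^[n] '' U :=
  attractor_invariant_general f hf U htrap
end
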